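/- arXiv:2507.01660 — 2 statements merged into one kernel-verified Lean document; each statement's English description precedes it below -/
import Mathlib

section
/- The N×N matrix D̃_{2:N+1}, consisting of columns 2 through N+1 of the augmented differentiation matrix D̃ = [D D_p] (that is, the columns L_2'(τ_i),…,L_N'(τ_i) of D together with the column D_p), is nonsingular. -/
open Polynomial

/-- `lagL τ i` is the `i`-th Lagrange basis polynomial (of degree `N - 1`)
for the nodes `τ 0, …, τ (N-1)`, satisfying `(lagL τ i).eval (τ j) = δᵢⱼ`. -/
noncomputable def lagL {N : ℕ} (τ : Fin N → ℝ) (i : Fin N) : ℝ[X] :=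
  Lagrange.basis Finset.univ τ i

/-- `lagLp τ` is the polynomial `L_p(x) = ∏ᵢ (x - τᵢ)`. -/
noncomputable def lagLp {N : ℕ} (τ : Fin N → ℝ) : ℝ[X] :=
  ∏ i, (X - C (τ i))

/-- The differentiation matrix `D`, with `D i j = L_j'(τ i)`. -/
noncomputable def matD {N : ℕ} (τ : Fin N → ℝ) : Matrix (Fin N) (Fin N) ℝ :=
  fun i j => (derivative (lagL τ j)).eval (τ i)

/-- The vector `D_p`, with `(D_p) i = L_p'(τ i)`. -/
noncomputable def vecDp {N : ℕ} (τ : Fin N → ℝ) : Fin N → ℝ :=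
  fun i => (derivative (lagLp τ)).eval (τ i)

/-- Columns `2, …, N+1` (in 1-based numbering) of the augmented differentiation
matrix `D̃ = [D  D_p]`: column `j` (0-based, `j < N - 1`) is column `j + 1` of `D`,
and the last column is `D_p`. -/
noncomputable def matDtil2 {N : ℕ} (τ : Fin N → ℝ) : Matrix (Fin N) (Fin N) ℝ :=
  fun i j => if h : (j : ℕ) + 1 < N then matD τ i ⟨(j : ℕ) + 1, h⟩ else vecDp τ i

/-- The quadrature rule with nodes `τ` and weights `w` integrates exactly all
polynomials of degree at most `2 * N - 3` over `[-1, 1]`. -/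
def IsQuadrature {N : ℕ} (τ : Fin N → ℝ) (w : Fin N → ℝ) : Prop :=
  ∀ p : ℝ[X], p.natDegree ≤ 2 * N - 3 →
    ∑ i, w i * p.eval (τ i) = ∫ t in (-1 : ℝ)..1, p.eval t

/-- The integration matrix `A` with rows indexed (0-based) by `i : Fin (N-1)`
corresponding to the node `τ (i+1)`: `A i j = ∫_{-1}^{τ (i+1)} L_j(t) dt`. -/
noncomputable def matA {N : ℕ} (τ : Fin N → ℝ) : Matrix (Fin (N - 1)) (Fin N) ℝ :=
  fun i j => ∫ t in (-1 : ℝ)..(τ ⟨(i : ℕ) + 1, by have := i.isLt; omega⟩), (lagL τ j).eval t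

/-- The row vector `A_p`, with `(A_p) j = (1/N) ∏_{k ≠ j} 1 / (τ j - τ k)`. -/
noncomputable def rowAp {N : ℕ} (τ : Fin N → ℝ) : Fin N → ℝ :=
  fun j => (1 / (N : ℝ)) * ∏ k ∈ Finset.univ.erase j, (τ j - τ k)⁻¹

/-- The matrix `Ã` obtained by stacking `A` on top of the row vector `A_p`. -/
noncomputable def matAtil {N : ℕ} (τ : Fin N → ℝ) : Matrix (Fin N) (Fin N) ℝ :=
  fun i j => if h : (i : ℕ) + 1 < N then matA τ ⟨(i : ℕ), by omega⟩ j else rowAp τ j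

/-- The adjoint integration matrix `A† = W⁻¹ Aᵀ W_{2:N}`, with columns indexed
(0-based) by `j : Fin (N-1)` corresponding to the node `τ (j+1)`. -/
noncomputable def matAdag {N : ℕ} (τ : Fin N → ℝ) (w : Fin N → ℝ) :
    Matrix (Fin N) (Fin (N - 1)) ℝ :=
  fun i j => (w i)⁻¹ * matA τ j i * w ⟨(j : ℕ) + 1, by have := j.isLt; omega⟩

/-- `polyM τ k` is the Lagrange basis polynomial (of degree `N - 3`) for the
interior nodes `τ 1, …, τ (N-2)`, satisfying `(polyM τ k).eval (τ m) = δₖₘ`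
for interior indices `m`. -/
noncomputable def polyM {N : ℕ} (τ : Fin N → ℝ) (k : Fin N) : ℝ[X] :=
  Lagrange.basis (Finset.univ.filter fun m : Fin N => 0 < (m : ℕ) ∧ (m : ℕ) < N - 1) τ k

/-- The polynomial `λ(x) = ∑ᵢ (A† r)ᵢ Lᵢ(x)`. -/
noncomputable def lamP {N : ℕ} (τ : Fin N → ℝ) (w : Fin N → ℝ) (r : Fin (N - 1) → ℝ) : ℝ[X] :=
  ∑ i, C ((matAdag τ w).mulVec r i) * lagL τ i

/-! A kernel vector `v` of `D̃_{2:N+1}` gives the polynomial `q = ∑ⱼ vⱼ Pⱼ` of degree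
`≤ N`, where `Pⱼ = dtilColPoly τ j` is `L_{j+1}`, or `L_p` for the last column, so that column
`j` of `D̃_{2:N+1}` holds the values of `Pⱼ'` at the nodes. Then `q'` has degree `< N` and
vanishes at all `N` nodes, so `q` is constant; every `Pⱼ` vanishes at `τ₀`, so `q = 0`.
Evaluating `q` at `τ_{j+1}` and reading off its coefficient of `X^N` then gives `v = 0`. -/

namespace Polynomial

theorem eq_zero_of_derivative_eval_eq_zero {R : Type*} [CommRing R] [IsDomain R] [CharZero R]
    {ι : Type*} [Fintype ι] {f : ι → R} (hf : Function.Injective f) {p : R[X]}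
    (hdeg : p.natDegree ≤ Fintype.card ι) (hderiv : ∀ i, p.derivative.eval (f i) = 0)
    {x : R} (hx : p.eval x = 0) : p = 0 := by
  have hp' : p.derivative = 0 := by
    by_cases hp0 : p.natDegree = 0
    · exact derivative_eq_zero.2 hp0
    · exact eq_zero_of_natDegree_lt_card_of_eval_eq_zero _ hf hderiv
        ((natDegree_derivative_lt hp0).trans_le hdeg)
  rw [eq_C_of_derivative_eq_zero hp'] at hx ⊢
  rw [eval_C] at hx
  rw [hx, C_0]

end Polynomial

section

variable {N : ℕ}

theorem lagLp_eq_nodal (τ : Fin N → ℝ) : lagLp τ = Lagrange.nodal Finset.univ τ :=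
  (Lagrange.nodal_eq _ _).symm

theorem natDegree_lagLp (τ : Fin N → ℝ) : (lagLp τ).natDegree = N := by
  simp [lagLp_eq_nodal, Lagrange.natDegree_nodal]

theorem coeff_lagLp_self (τ : Fin N → ℝ) : (lagLp τ).coeff N = 1 := by
  simpa [← lagLp_eq_nodal, natDegree_lagLp] using
    (Lagrange.nodal_monic (s := Finset.univ) (v := τ)).coeff_natDegree

theorem eval_lagLp_node (τ : Fin N → ℝ) (i : Fin N) : (lagLp τ).eval (τ i) = 0 := by
  simp [lagLp_eq_nodal, Lagrange.eval_nodal_at_node]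

theorem natDegree_lagL {τ : Fin N → ℝ} (hτ : Function.Injective τ) (i : Fin N) :
    (lagL τ i).natDegree = N - 1 := by
  simpa [lagL] using Lagrange.natDegree_basis hτ.injOn (Finset.mem_univ i)

theorem eval_lagL_node {τ : Fin N → ℝ} (hτ : Function.Injective τ) (i j : Fin N) :
    (lagL τ i).eval (τ j) = if i = j then 1 else 0 := by
  split_ifs with hij
  · rw [hij, lagL, Lagrange.eval_basis_self hτ.injOn (Finset.mem_univ j)]
  · exact Lagrange.eval_basis_of_ne hij (Finset.mem_univ j)

noncomputable def dtilColPoly (τ : Fin N → ℝ) (j : Fin N) : ℝ[X] :=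
  if h : (j : ℕ) + 1 < N then lagL τ ⟨(j : ℕ) + 1, h⟩ else lagLp τ

theorem matDtil2_apply (τ : Fin N → ℝ) (i j : Fin N) :
    matDtil2 τ i j = (derivative (dtilColPoly τ j)).eval (τ i) := by
  unfold matDtil2 dtilColPoly
  split_ifs <;> rfl

theorem natDegree_dtilColPoly_le {τ : Fin N → ℝ} (hτ : Function.Injective τ) (j : Fin N) :
    (dtilColPoly τ j).natDegree ≤ N := by
  unfold dtilColPoly
  split_ifs
  · rw [natDegree_lagL hτ]; omega
  · rw [natDegree_lagLp]

theorem eval_dtilColPoly_first {τ : Fin N → ℝ} (hτ : Function.Injective τ) (j : Fin N) :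
    (dtilColPoly τ j).eval (τ ⟨0, j.pos⟩) = 0 := by
  unfold dtilColPoly
  split_ifs
  · rw [eval_lagL_node hτ, if_neg (by simp [Fin.ext_iff])]
  · exact eval_lagLp_node τ _

theorem eval_dtilColPoly_succ {τ : Fin N → ℝ} (hτ : Function.Injective τ) (j k : Fin N)
    (hk : (k : ℕ) + 1 < N) :
    (dtilColPoly τ j).eval (τ ⟨(k : ℕ) + 1, hk⟩) = if j = k then 1 else 0 := by
  unfold dtilColPoly
  split_ifs with hj hjk hjk
  · rw [eval_lagL_node hτ, if_pos (by simp [hjk])]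
  · rw [eval_lagL_node hτ, if_neg (by simpa [Fin.ext_iff] using hjk)]
  · exact absurd (hjk ▸ hk) hj
  · exact eval_lagLp_node τ _

theorem coeff_dtilColPoly_top {τ : Fin N → ℝ} (hτ : Function.Injective τ) (j k : Fin N)
    (hk : (k : ℕ) + 1 = N) : (dtilColPoly τ j).coeff N = if j = k then 1 else 0 := by
  unfold dtilColPoly
  split_ifs with hj hjk hjk
  · omega
  · exact coeff_eq_zero_of_natDegree_lt (by rw [natDegree_lagL hτ]; omega)
  · exact coeff_lagLp_self τ
  · exact absurd (Fin.ext (by omega)) hjk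

theorem eq_zero_of_matDtil2_mulVec_eq_zero {τ : Fin N → ℝ} (hτ : Function.Injective τ)
    {v : Fin N → ℝ} (hv : (matDtil2 τ).mulVec v = 0) : v = 0 := by
  set q : ℝ[X] := ∑ j, C (v j) * dtilColPoly τ j
  have hderiv (i : Fin N) : (derivative q).eval (τ i) = 0 := by
    simpa [q, Matrix.mulVec, dotProduct, matDtil2_apply, eval_finsetSum, mul_comm]
      using congrFun hv i
  funext k
  have hq : q = 0 := by
    refine eq_zero_of_derivative_eval_eq_zero hτ ?_ hderiv (x := τ ⟨0, k.pos⟩) ?_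
    · simpa using natDegree_sum_le_of_forall_le _ _
        fun j _ => (natDegree_C_mul_le _ _).trans (natDegree_dtilColPoly_le hτ j)
    · simp [q, eval_finsetSum, eval_dtilColPoly_first hτ]
  by_cases hk : (k : ℕ) + 1 < N
  · simpa [q, eval_finsetSum, eval_dtilColPoly_succ hτ _ k hk]
      using congrArg (eval (τ ⟨k + 1, hk⟩)) hq
  · simpa [q, finsetSum_coeff, coeff_dtilColPoly_top hτ _ k (by omega)]
      using congrArg (coeff · N) hq

end

/-- The matrix `D̃_{2:N+1}` is nonsingular. -/
theorem stmt0 (N : ℕ) (τ : Fin N → ℝ) (hmono : StrictMono τ) :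
    (matDtil2 τ).det ≠ 0 := by
  intro hdet
  obtain ⟨v, hv, hkernel⟩ := Matrix.exists_mulVec_eq_zero_iff.2 hdet
  exact hv (eq_zero_of_matDtil2_mulVec_eq_zero hmono.injective hkernel)
end

section
/- For any vector r ∈ ℝ^{N−1} with entries r_2,…,r_N, the interpolation polynomial λ(τ) = ∑_{i=1}^N (A† r)_i L_i(τ), where (A† r)_i denotes the i-th entry of A† r, has degree at most N−2. -/
open Polynomial

/-! The coefficient of `X ^ (N - 1)` in `λ` is `∑ᵢ cᵢ (A† r)ᵢ`, where `cᵢ = ∏_{k ≠ i} (τᵢ - τₖ)⁻¹`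
is the nodal weight; unfolding `A†` it becomes `∑_{j ≥ 2} wⱼ rⱼ g(τⱼ)` with `g(x) = ∫_{-1}^x φ` and
`φ` the interpolant of `cᵢ / wᵢ`. Since `∑ᵢ cᵢ p(τᵢ)` is the coefficient of `X ^ (N - 1)` of `p`
whenever `deg p < N`, the quadrature rule gives `g(1) = ∑ᵢ cᵢ = 0` and, applied to `(g ψ)'` with
`ψ' = χ`, `∑ᵢ wᵢ g(τᵢ) χ(τᵢ) = 0` for every `χ` of degree at most `N - 3`. Taking for `χ` the
interpolant of `g` at the `N - 2` interior nodes gives `∑ᵢ wᵢ g(τᵢ)² = 0`, so `g` vanishes at every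
node. -/

open Finset

namespace Polynomial

section Antideriv

variable {K : Type*} [Field K]

noncomputable def antideriv (p : K[X]) : K[X] :=
  p.sum fun n a => C (a / (n + 1)) * X ^ (n + 1)

theorem derivative_antideriv [CharZero K] (p : K[X]) : derivative (antideriv p) = p := by
  conv_rhs => rw [← p.sum_C_mul_X_pow_eq]
  rw [antideriv, Polynomial.sum_def, Polynomial.sum_def, derivative_sum]
  refine sum_congr rfl fun n _ => ?_
  rw [derivative_C_mul, derivative_X_pow, ← mul_assoc, ← C_mul]
  push_cast
  congr 2
  field_simp

theorem natDegree_antideriv_le (p : K[X]) : (antideriv p).natDegree ≤ p.natDegree + 1 := by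
  rw [antideriv, Polynomial.sum_def]
  refine natDegree_sum_le_of_forall_le _ _ fun n hn => natDegree_mul_le.trans ?_
  have := le_natDegree_of_mem_supp n hn
  simp only [natDegree_C, natDegree_X_pow]
  omega

end Antideriv

theorem natDegree_le_sub_two_of_degree_lt {R : Type*} [Semiring R] {p : R[X]} {n : ℕ}
    (hp : p.degree < n) (hn : p.coeff (n - 1) = 0) : p.natDegree ≤ n - 2 := by
  refine natDegree_le_iff_coeff_eq_zero.mpr fun m hm => ?_
  rcases eq_or_ne m (n - 1) with rfl | hm'
  · exact hn
  · exact coeff_eq_zero_of_degree_lt (hp.trans_le (by exact_mod_cast (by omega : n ≤ m)))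

theorem integral_eval_derivative (q : ℝ[X]) (a b : ℝ) :
    ∫ t in a..b, (derivative q).eval t = q.eval b - q.eval a :=
  intervalIntegral.integral_eq_sub_of_hasDerivAt (fun x _ => q.hasDerivAt x)
    ((derivative q).continuous.intervalIntegrable _ _)

end Polynomial

namespace Lagrange

variable {F : Type*} [Field F] {ι : Type*} [DecidableEq ι] {s : Finset ι} {v : ι → F}

theorem coeff_card_sub_one_eq_sum_nodalWeight_mul (hvs : Set.InjOn v s) {P : F[X]}
    (hP : P.degree < #s) :
    P.coeff (#s - 1) = ∑ i ∈ s, nodalWeight s v i * P.eval (v i) := by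
  rw [coeff_eq_sum hvs hP]
  refine sum_congr rfl fun i _ => ?_
  rw [nodalWeight, prod_inv_distrib, div_eq_inv_mul]

theorem sum_nodalWeight_mul_eval_eq_zero (hvs : Set.InjOn v s) {P : F[X]}
    (hP : P.degree < ↑(#s - 1)) : ∑ i ∈ s, nodalWeight s v i * P.eval (v i) = 0 := by
  rw [← coeff_card_sub_one_eq_sum_nodalWeight_mul hvs
    (hP.trans_le (by exact_mod_cast Nat.sub_le _ _))]
  exact coeff_eq_zero_of_degree_lt hP

theorem coeff_card_sub_one_interpolate (hvs : Set.InjOn v s) (r : ι → F) :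
    (interpolate s v r).coeff (#s - 1) = ∑ i ∈ s, nodalWeight s v i * r i := by
  rw [coeff_card_sub_one_eq_sum_nodalWeight_mul hvs (degree_interpolate_lt r hvs)]
  exact sum_congr rfl fun i hi => by rw [eval_interpolate_at_node r hvs hi]

theorem eq_zero_of_forall_sum_mul_eval_eq_zero [LinearOrder F] [IsStrictOrderedRing F]
    [Fintype ι] (hvs : Set.InjOn v s) {w : ι → F} (hw : ∀ i, 0 < w i) {f : ι → F}
    (hfs : ∀ i ∉ s, f i = 0)
    (horth : ∀ χ : F[X], χ.degree < #s → ∑ i, w i * f i * χ.eval (v i) = 0) : f = 0 := by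
  -- test against the interpolant of `f` on `s`
  have hsq : ∑ i, w i * f i ^ 2 = 0 := by
    rw [← horth _ (degree_interpolate_lt f hvs)]
    refine sum_congr rfl fun i _ => ?_
    by_cases hi : i ∈ s
    · rw [eval_interpolate_at_node f hvs hi, sq, mul_assoc]
    · simp [hfs i hi]
  have hnonneg : ∀ i ∈ univ, 0 ≤ w i * f i ^ 2 := fun i _ => mul_nonneg (hw i).le (sq_nonneg _)
  funext i
  simpa [(hw i).ne'] using (sum_eq_zero_iff_of_nonneg hnonneg).mp hsq i (mem_univ i)

end Lagrange

open Lagrange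

namespace IsQuadrature

variable {N : ℕ} {τ w : Fin N → ℝ}

theorem sum_mul_eval_derivative (hquad : IsQuadrature τ w) {q : ℝ[X]}
    (hq : q.natDegree ≤ 2 * N - 2) :
    ∑ i, w i * (derivative q).eval (τ i) = q.eval 1 - q.eval (-1) := by
  rw [hquad _ ((natDegree_derivative_le q).trans (by omega)), integral_eval_derivative]

theorem sum_mul_eval_mul_eval_eq_zero (hquad : IsQuadrature τ w) (hτ : Function.Injective τ)
    {g : ℝ[X]} (hg : g.natDegree ≤ N)
    (hgw : ∀ i, w i * (derivative g).eval (τ i) = nodalWeight univ τ i)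
    (hg₀ : g.eval (-1) = 0) (hg₁ : g.eval 1 = 0) {χ : ℝ[X]} (hχ : χ.natDegree + 3 ≤ N) :
    ∑ i, w i * g.eval (τ i) * χ.eval (τ i) = 0 := by
  have hψ : (antideriv χ).natDegree + 2 ≤ N := by have := natDegree_antideriv_le χ; omega
  have hparts := hquad.sum_mul_eval_derivative (q := g * antideriv χ)
    (natDegree_mul_le.trans (by omega))
  have hψ_orth : ∑ i, nodalWeight univ τ i * (antideriv χ).eval (τ i) = 0 := by
    refine sum_nodalWeight_mul_eval_eq_zero hτ.injOn ?_
    rw [card_fin]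
    exact degree_le_natDegree.trans_lt (by exact_mod_cast (by omega : _ < N - 1))
  simp only [eval_mul, hg₀, hg₁, zero_mul, sub_zero, derivative_mul, derivative_antideriv,
    eval_add, mul_add, sum_add_distrib, ← mul_assoc, hgw, hψ_orth, zero_add] at hparts
  exact hparts

theorem eval_eq_zero_of_mul_eval_derivative_eq_nodalWeight (hquad : IsQuadrature τ w) (hN : 3 ≤ N)
    (hτ : Function.Injective τ) {i₀ i₁ : Fin N} (h₀ : τ i₀ = -1) (h₁ : τ i₁ = 1)
    (hw : ∀ i, 0 < w i) {g : ℝ[X]} (hg : g.natDegree ≤ N)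
    (hgw : ∀ i, w i * (derivative g).eval (τ i) = nodalWeight univ τ i)
    (hg₀ : g.eval (-1) = 0) (m : Fin N) : g.eval (τ m) = 0 := by
  have hg₁ : g.eval 1 = 0 := by
    have h := sum_nodalWeight_mul_eval_eq_zero (P := 1) hτ.injOn
      (by rw [card_fin, degree_one]; exact_mod_cast (by omega : 0 < N - 1))
    simp only [eval_one, mul_one, ← hgw] at h
    rw [hquad.sum_mul_eval_derivative (hg.trans (by omega)), hg₀] at h
    linarith
  have h₀₁ : i₀ ≠ i₁ := fun h => by norm_num [h, h₁] at h₀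
  set s := univ \ {i₀, i₁}
  have hs : #s = N - 2 := by
    rw [card_sdiff_of_subset (subset_univ _), card_univ, Fintype.card_fin, card_pair h₀₁]
  have hvanish := eq_zero_of_forall_sum_mul_eval_eq_zero (f := fun m => g.eval (τ m))
    hτ.injOn hw (s := s) ?_ fun χ hχ => ?_
  · exact congrFun hvanish m
  · intro i hi
    obtain rfl | rfl : i = i₀ ∨ i = i₁ := by
      simpa [s, or_iff_not_imp_left] using hi
    · rw [h₀, hg₀]
    · rw [h₁, hg₁]
  · refine hquad.sum_mul_eval_mul_eval_eq_zero hτ hg hgw hg₀ hg₁ ?_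
    rw [hs] at hχ
    rcases eq_or_ne χ 0 with rfl | hχ0
    · simp only [natDegree_zero]; omega
    · have := (natDegree_lt_iff_degree_lt hχ0).mpr hχ; omega

theorem integral_interpolate_nodalWeight_div_eq_zero (hquad : IsQuadrature τ w) (hN : 3 ≤ N)
    (hτ : Function.Injective τ) {i₀ i₁ : Fin N} (h₀ : τ i₀ = -1) (h₁ : τ i₁ = 1)
    (hw : ∀ i, 0 < w i) (m : Fin N) :
    ∫ t in (-1 : ℝ)..τ m, (interpolate univ τ fun i => nodalWeight univ τ i / w i).eval t = 0 := by
  set φ := interpolate univ τ fun i => nodalWeight univ τ i / w i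
  set g := antideriv φ - C ((antideriv φ).eval (-1))
  have hg' : derivative g = φ := by simp [g, derivative_antideriv]
  have hg₀ : g.eval (-1) = 0 := by simp [g]
  have hgw : ∀ i, w i * (derivative g).eval (τ i) = nodalWeight univ τ i := fun i => by
    rw [hg', eval_interpolate_at_node _ hτ.injOn (mem_univ i), mul_div_cancel₀ _ (hw i).ne']
  have hgdeg : g.natDegree ≤ N := by
    have : φ.natDegree ≤ #(univ : Finset (Fin N)) - 1 :=
      natDegree_le_of_degree_le (degree_interpolate_le _ hτ.injOn)
    rw [card_fin] at this
    exact natDegree_sub_C.trans_le ((natDegree_antideriv_le φ).trans (by omega))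
  rw [← hg', integral_eval_derivative, hg₀, sub_zero]
  exact hquad.eval_eq_zero_of_mul_eval_derivative_eq_nodalWeight hN hτ h₀ h₁ hw hgdeg hgw hg₀ m

end IsQuadrature

theorem lamP_eq_interpolate {N : ℕ} (τ : Fin N → ℝ) (w : Fin N → ℝ) (r : Fin (N - 1) → ℝ) :
    lamP τ w r = interpolate univ τ ((matAdag τ w).mulVec r) := rfl

theorem sum_mul_matA {N : ℕ} (τ : Fin N → ℝ) (a : Fin N → ℝ) (j : Fin (N - 1)) :
    ∑ i, a i * matA τ j i =
      ∫ t in (-1 : ℝ)..τ ⟨(j : ℕ) + 1, by have := j.isLt; omega⟩,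
        (interpolate univ τ a).eval t := by
  simp only [matA, interpolate_apply, eval_finsetSum, eval_mul, eval_C, lagL]
  rw [intervalIntegral.integral_finsetSum (f := fun i t => a i * (Lagrange.basis univ τ i).eval t)
    fun i _ => (continuous_const.mul (Lagrange.basis univ τ i).continuous).intervalIntegrable _ _]
  simp only [intervalIntegral.integral_const_mul]

theorem sum_mul_matAdag_mulVec {N : ℕ} (τ w : Fin N → ℝ) (a : Fin N → ℝ) (r : Fin (N - 1) → ℝ) :
    ∑ i, a i * ((matAdag τ w).mulVec r) i =
      ∑ j : Fin (N - 1), w ⟨(j : ℕ) + 1, by have := j.isLt; omega⟩ * r j *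
        ∫ t in (-1 : ℝ)..τ ⟨(j : ℕ) + 1, by have := j.isLt; omega⟩,
          (interpolate univ τ fun i => a i / w i).eval t := by
  simp only [← sum_mul_matA, Matrix.mulVec, dotProduct, matAdag, mul_sum]
  rw [sum_comm]
  refine sum_congr rfl fun j _ => sum_congr rfl fun i _ => ?_
  ring

/-- The polynomial `λ = ∑ᵢ (A† r)ᵢ Lᵢ` has degree at most `N - 2`. -/
theorem stmt7 (N : ℕ) (hN : 3 ≤ N) (τ : Fin N → ℝ) (hmono : StrictMono τ)
    (h0 : τ ⟨0, by omega⟩ = -1) (h1 : τ ⟨N - 1, by omega⟩ = 1) (w : Fin N → ℝ) (hw : ∀ i, 0 < w i) (hquad : IsQuadrature τ w) :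
    ∀ r : Fin (N - 1) → ℝ, (lamP τ w r).natDegree ≤ N - 2 := by
  intro r
  have hτ := hmono.injective
  have hdeg := degree_interpolate_lt (s := univ) ((matAdag τ w).mulVec r) hτ.injOn
  have hcoeff := coeff_card_sub_one_interpolate (s := univ) hτ.injOn ((matAdag τ w).mulVec r)
  rw [card_fin] at hdeg hcoeff
  rw [lamP_eq_interpolate]
  refine natDegree_le_sub_two_of_degree_lt hdeg ?_
  rw [hcoeff, sum_mul_matAdag_mulVec]
  exact sum_eq_zero fun j _ => mul_eq_zero_of_right _
    (hquad.integral_interpolate_nodalWeight_div_eq_zero hN hτ h0 h1 hw _)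
end
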